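/- (Goldberg's theorem for m_3, uniqueness part.) Let p, q be integers with q ≥ 1, 0 ≤ p < q and gcd(p,q) = 1. If X and Y are rotation sets for m_3, each equal to the union of two distinct periodic orbits of m_3, with ρ(X) = ρ(Y) = p/q (mod ℤ), #X = #Y = 2q, and s₁(X) = s₁(Y), then X = Y. -/

import Mathlib

open Set MeasureTheory ENNReal

noncomputable section

instance : Fact ((0:ℝ) < 1) := ⟨one_pos⟩

/-- The circle `ℝ/ℤ`. -/
abbrev Circle1 : Type := AddCircle (1 : ℝ)

/-- The multiplication-by-`d` map `m_d` on the circle. -/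
def md (d : ℕ) : Circle1 → Circle1 := fun t => d • t

/-- `G : ℝ → ℝ` (monotone, commuting with `x ↦ x + 1`) is a lift of the circle map `g`. -/
def IsLift (g : Circle1 → Circle1) (G : CircleDeg1Lift) : Prop :=
  ∀ x : ℝ, g ((x : ℝ) : Circle1) = ((G x : ℝ) : Circle1)

/-- `g` is a monotone degree-one circle map. -/
def IsMonotoneDeg1 (g : Circle1 → Circle1) : Prop :=
  ∃ G : CircleDeg1Lift, IsLift g G

/-- `ρ` is the rotation number of the monotone degree-one circle map `g`:
the residue class mod `ℤ` of the translation number of a lift of `g`. -/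
def HasRotationNumber (g : Circle1 → Circle1) (ρ : Circle1) : Prop :=
  ∃ G : CircleDeg1Lift, IsLift g G ∧ ρ = ((G.translationNumber : ℝ) : Circle1)

/-- `X` is a rotation set for `m_d`. -/
def IsRotationSet (d : ℕ) (X : Set Circle1) : Prop :=
  X.Nonempty ∧ IsCompact X ∧ md d '' X = X ∧
    ∃ g : Circle1 → Circle1, IsMonotoneDeg1 g ∧ ∀ t ∈ X, g t = md d t

/-- `X` is a rotation set for `m_d` with rotation number `ρ`. -/
def IsRotationSetWith (d : ℕ) (X : Set Circle1) (ρ : Circle1) : Prop :=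
  X.Nonempty ∧ IsCompact X ∧ md d '' X = X ∧
    ∃ g : Circle1 → Circle1, (∀ t ∈ X, g t = md d t) ∧ HasRotationNumber g ρ

/-- A gap of `X` is a connected component of the complement of `X`. -/
def IsGap (X : Set Circle1) (I : Set Circle1) : Prop :=
  ∃ t ∈ Xᶜ, I = connectedComponentIn Xᶜ t

/-- `C` is a periodic orbit (cycle) of `m_d`. -/
def IsPeriodicOrbit (d : ℕ) (C : Set Circle1) : Prop :=
  ∃ (t : Circle1) (n : ℕ), 0 < n ∧ (md d)^[n] t = t ∧
    C = Set.range (fun k : Fin n => (md d)^[(k : ℕ)] t)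

/-- The number of points of `X` whose representative in `[0,1)` lies in `[0,1/2)`. -/
def s1 (X : Set Circle1) : ℕ :=
  {t ∈ X | ((AddCircle.equivIco 1 0 t : ℝ) < 1 / 2)}.ncard

/-!
Order the `2q` points of `X` as `x 0 < ⋯ < x (2q - 1)` in `[0, 1)`. Lifting them to `ℤ`-indexed
points of `ℝ`, a monotone degree-one extension of `m_3` acts on the lifts as a shift of the
index by some `c`, so its translation number is `c / 2q`; hence `m_3` acts on `X` as `i ↦ i + 2p`,
i.e. `3 x_i = ⌊3 x_i⌋ + x_{i+2p}`. The digit `⌊3 x_i⌋` increases with `i` and jumps at the indices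
`#{x < 1/3}` and `#{x < 2/3}`: one of them is `2q - 2p`, where the rotation wraps around, and the
other is `#{x < 1/2} = s₁(X)`. So two such sets with the same `s₁` have the same digits, and then
`3 (x_i - y_i) = x_{i+2p} - y_{i+2p}` forces `x = y`.
-/

theorem coe_eq_coe_iff_fract_eq {u v : ℝ} : (u : Circle1) = v ↔ Int.fract u = Int.fract v := by
  rw [Int.fract_eq_fract, QuotientAddGroup.eq_iff_sub_mem, AddSubgroup.mem_zmultiples_iff]
  simp only [zsmul_eq_mul, mul_one, eq_comm]

theorem equivIco_coe (u : ℝ) : (AddCircle.equivIco 1 0 (u : Circle1) : ℝ) = Int.fract u := by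
  simp [AddCircle.coe_equivIco_mk_apply]

theorem md_coe (d : ℕ) (u : ℝ) : md d (u : Circle1) = ((d * u : ℝ) : Circle1) := by
  rw [md, ← AddCircle.coe_nsmul, nsmul_eq_mul]

theorem Set.Finite.exists_strictMonoOn_image_eq {X : Set Circle1} (hX : X.Finite) :
    ∃ x : ℕ → ℝ, StrictMonoOn x (Iio X.ncard) ∧
      (∀ i < X.ncard, x i ∈ Ico (0 : ℝ) 1) ∧ X = (fun i => (x i : Circle1)) '' Iio X.ncard := by
  set e : Circle1 → ℝ := fun t => AddCircle.equivIco 1 0 t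
  have he : e.Injective := fun a b h => (AddCircle.equivIco 1 0).injective (Subtype.coe_injective h)
  set R := hX.toFinset.image e
  have hR : R.card = X.ncard := by
    rw [Finset.card_image_of_injective _ he, Set.ncard_eq_toFinset_card X hX]
  set f := R.orderEmbOfFin hR
  set x : ℕ → ℝ := fun i => if h : i < X.ncard then f ⟨i, h⟩ else 0
  have hxf : ∀ i (hi : i < X.ncard), x i = f ⟨i, hi⟩ := fun i hi => dif_pos hi
  refine ⟨x, fun i hi j hj hij => ?_, fun i hi => ?_, ?_⟩
  · rw [hxf i hi, hxf j hj]
    exact f.strictMono (show (⟨i, hi⟩ : Fin _) < ⟨j, hj⟩ from hij)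
  · obtain ⟨t, -, ht⟩ := Finset.mem_image.1 (R.orderEmbOfFin_mem hR ⟨i, hi⟩)
    rw [hxf i hi, ← ht]
    simpa using (AddCircle.equivIco 1 0 t).2
  · ext t
    constructor
    · intro ht
      have : e t ∈ Set.range f := by
        rw [Finset.range_orderEmbOfFin]; exact Finset.mem_image_of_mem e (hX.mem_toFinset.2 ht)
      obtain ⟨⟨i, hi⟩, hit⟩ := this
      refine ⟨i, hi, ?_⟩
      dsimp only
      rw [hxf i hi, hit]
      exact (AddCircle.equivIco 1 0).symm_apply_apply t
    · rintro ⟨i, hi, rfl⟩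
      obtain ⟨t, ht, het⟩ := Finset.mem_image.1 (R.orderEmbOfFin_mem hR ⟨i, hi⟩)
      dsimp only
      rw [hxf i hi, ← het,
        show ((e t : ℝ) : Circle1) = t from (AddCircle.equivIco 1 0).symm_apply_apply t]
      exact hX.mem_toFinset.1 ht

/-- The `1`-periodic extension to `ℤ` of `x 0 < ⋯ < x (n - 1)`:
`periodicLift n x (i + n * k) = x i + k` for `i < n`. -/
def periodicLift (n : ℕ) (x : ℕ → ℝ) (j : ℤ) : ℝ := x (j % n).toNat + (j / n : ℤ)

section periodicLift

variable {n : ℕ} {x : ℕ → ℝ}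

theorem periodicLift_add_mul (hn : 0 < n) (j k : ℤ) :
    periodicLift n x (j + n * k) = periodicLift n x j + k := by
  have hn' : (n : ℤ) ≠ 0 := by exact_mod_cast hn.ne'
  simp only [periodicLift, Int.add_mul_emod_self_left, Int.add_mul_ediv_left _ _ hn']
  push_cast; ring

theorem periodicLift_natCast {i : ℕ} (hi : i < n) : periodicLift n x i = x i := by
  have hi' : (i : ℤ) < n := by exact_mod_cast hi
  simp [periodicLift, Int.emod_eq_of_lt (Int.natCast_nonneg i) hi',
    Int.ediv_eq_zero_of_lt (Int.natCast_nonneg i) hi']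

theorem toNat_emod_lt (hn : 0 < n) (j : ℤ) : (j % n).toNat < n := by
  have := Int.emod_nonneg j (show (n : ℤ) ≠ 0 by omega)
  have := Int.emod_lt_of_pos j (show (0 : ℤ) < n by omega)
  omega

variable (hn : 0 < n) (hx : StrictMonoOn x (Iio n)) (hx01 : ∀ i < n, x i ∈ Ico (0 : ℝ) 1)
include hn hx01

theorem fract_periodicLift (j : ℤ) : Int.fract (periodicLift n x j) = x (j % n).toNat := by
  rw [periodicLift, Int.fract_add_intCast, Int.fract_eq_self.2 (hx01 _ (toNat_emod_lt hn j))]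

include hx in
theorem strictMono_periodicLift : StrictMono (periodicLift n x) := by
  intro j j' h
  have hn' : (0 : ℤ) < n := by exact_mod_cast hn
  have hr := hx01 _ (toNat_emod_lt hn j)
  have hr' := hx01 _ (toNat_emod_lt hn j')
  rcases (Int.ediv_le_ediv hn' h.le).eq_or_lt with hq | hq
  · have := Int.emod_nonneg j hn'.ne'
    have := Int.emod_nonneg j' hn'.ne'
    have := Int.mul_ediv_add_emod j n
    have := Int.mul_ediv_add_emod j' n
    have := hx (toNat_emod_lt hn j) (toNat_emod_lt hn j')
      (show (j % n).toNat < (j' % n).toNat by rw [← hq] at *; omega)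
    simp only [periodicLift, hq]
    linarith
  · have : ((j / n : ℤ) : ℝ) + 1 ≤ (j' / n : ℤ) := by exact_mod_cast hq
    simp only [periodicLift]
    linarith [hr.2, hr'.1]

theorem coe_mem_image_iff_mem_range_periodicLift {t : ℝ} :
    (t : Circle1) ∈ (fun i => (x i : Circle1)) '' Iio n ↔ t ∈ range (periodicLift n x) := by
  constructor
  · rintro ⟨i, hi, hit⟩
    refine ⟨i + n * ⌊t⌋, ?_⟩
    have hfract := (coe_eq_coe_iff_fract_eq.1 hit).symm
    rw [Int.fract_eq_self.2 (hx01 i hi)] at hfract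
    rw [periodicLift_add_mul hn, periodicLift_natCast hi, ← hfract, Int.fract_add_floor]
  · rintro ⟨j, rfl⟩
    refine ⟨_, toNat_emod_lt hn j, ?_⟩
    rw [coe_eq_coe_iff_fract_eq, fract_periodicLift hn hx01,
      Int.fract_eq_self.2 (hx01 _ (toNat_emod_lt hn j))]

end periodicLift

theorem eq_add_of_strictMono_of_map_add_nat {N : ℤ → ℤ} {n : ℕ} (hn : 0 < n) (hN : StrictMono N)
    (hper : ∀ j, N (j + n) = N j + n) (j : ℤ) : N j = j + N 0 := by
  have hge : ∀ (m : ℕ) j, N j + m ≤ N (j + m) := by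
    intro m
    induction m with
    | zero => simp
    | succ m ih =>
      intro j
      have := hN (lt_add_one (j + m))
      have := ih j
      push_cast
      rw [← add_assoc j]
      omega
  have hstep : ∀ j, N (j + 1) = N j + 1 := by
    intro j
    have h1 := hN (lt_add_one j)
    have h2 := hge (n - 1) (j + 1)
    rw [show j + 1 + ((n - 1 : ℕ) : ℤ) = j + n by omega, hper] at h2
    omega
  induction j using Int.induction_on with
  | zero => simp
  | succ m ih => rw [hstep, ih]; ring
  | pred m ih =>
    have := hstep (-(m : ℤ) - 1)
    rw [sub_add_cancel, ih] at this
    omega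

section CircleDeg1Lift

variable {G : CircleDeg1Lift} {y : ℤ → ℝ} {n : ℕ}

theorem CircleDeg1Lift.exists_map_comp_eq_comp_add (hn : 0 < n) (hy : StrictMono y)
    (hper : ∀ j k, y (j + n * k) = y j + k) (hmap : ∀ j, G (y j) ∈ range y)
    (hinj : Function.Injective (G ∘ y)) : ∃ c : ℤ, ∀ j, G (y j) = y (j + c) := by
  choose N hN using hmap
  have hNinj : N.Injective := fun j j' h => hinj (by simp only [Function.comp, ← hN, h])
  have hNmono : StrictMono N := by
    refine Monotone.strictMono_of_injective (fun j j' h => ?_) hNinj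
    rw [← hy.le_iff_le, hN, hN]
    exact G.monotone (hy.monotone h)
  have hNper : ∀ j, N (j + n) = N j + n := fun j => hy.injective <| by
    rw [hN, ← mul_one (n : ℤ), hper, hper, hN, Int.cast_one, G.map_add_one]
  exact ⟨N 0, fun j => by rw [← hN, eq_add_of_strictMono_of_map_add_nat hn hNmono hNper]⟩

theorem CircleDeg1Lift.translationNumber_eq_of_map_comp_eq_comp_add (hn : 0 < n)
    (hper : ∀ j k, y (j + n * k) = y j + k) {c : ℤ} (hc : ∀ j, G (y j) = y (j + c)) :
    G.translationNumber = c / n := by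
  have hpow : ∀ m : ℕ, (G ^ m) (y 0) = y (m * c) := by
    intro m
    induction m with
    | zero => simp
    | succ m ih => rw [pow_succ', CircleDeg1Lift.mul_apply, ih, hc]; push_cast; ring_nf
  refine G.translationNumber_of_map_pow_eq_add_int (x := y 0) ?_ hn
  rw [hpow, ← hper 0 c, zero_add]

end CircleDeg1Lift

/-- `x 0 < ⋯ < x (n - 1)` are the representatives in `[0, 1)` of an `m_d`-invariant set on which
`m_d` acts as the rotation `i ↦ i + r mod n` of the indices. -/
structure IsRotationEnum (d n r : ℕ) (x : ℕ → ℝ) : Prop where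
  strictMonoOn : StrictMonoOn x (Iio n)
  mem_Ico : ∀ i < n, x i ∈ Ico (0 : ℝ) 1
  fract_mul : ∀ i < n, Int.fract (d * x i) = x ((i + r) % n)

theorem coe_div_eq_coe_toNat_emod_div {n : ℕ} (hn : 0 < n) (c : ℤ) :
    ((c / n : ℝ) : Circle1) = (((c % n).toNat / n : ℝ) : Circle1) := by
  rw [coe_eq_coe_iff_fract_eq, Int.fract_eq_fract]
  refine ⟨c / n, ?_⟩
  have hn' : (n : ℝ) ≠ 0 := by positivity
  have hr : (((c % n).toNat : ℕ) : ℝ) = ((c % n : ℤ) : ℝ) := by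
    exact_mod_cast Int.toNat_of_nonneg (Int.emod_nonneg c (by omega))
  rw [hr]
  field_simp
  rw [sub_eq_iff_eq_add]
  exact_mod_cast (Int.mul_ediv_add_emod c n).symm

theorem IsLift.injective_comp {g : Circle1 → Circle1} {G : CircleDeg1Lift} (hG : IsLift g G)
    {y : ℤ → ℝ} (hy : Function.Injective y) (hg : InjOn g (range fun j => (y j : Circle1))) :
    Function.Injective (G ∘ y) := fun j k h => by
  have hjk : (y j : Circle1) = y k := hg ⟨j, rfl⟩ ⟨k, rfl⟩ (by rw [hG, hG]; exact congrArg _ h)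
  obtain ⟨z, hz⟩ := Int.fract_eq_fract.1 (coe_eq_coe_iff_fract_eq.1 hjk)
  have hGz : G (y j) = G (y k) + z := by rw [← G.map_add_int, ← hz, add_sub_cancel]
  have h' : G (y j) = G (y k) := h
  exact hy (by linarith [show (z : ℝ) = 0 by linarith])

theorem IsRotationSetWith.exists_isRotationEnum {d : ℕ} {X : Set Circle1} {ρ : Circle1}
    (hX : IsRotationSetWith d X ρ) (hfin : X.Finite) :
    ∃ x : ℕ → ℝ, ∃ r < X.ncard, ρ = ((r / X.ncard : ℝ) : Circle1) ∧
      IsRotationEnum d X.ncard r x ∧ X = (fun i => (x i : Circle1)) '' Iio X.ncard := by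
  obtain ⟨hne, -, him, g, hgX, G, hG, hρ⟩ := hX
  have hn : 0 < X.ncard := (Set.ncard_pos hfin).2 hne
  obtain ⟨x, hx, hx01, hXx⟩ := hfin.exists_strictMonoOn_image_eq
  set n := X.ncard
  set y := periodicLift n x
  have hper : ∀ j k, y (j + n * k) = y j + k := periodicLift_add_mul hn
  have hmem : ∀ t : ℝ, (t : Circle1) ∈ X ↔ t ∈ range y := fun t => by
    rw [hXx]; exact coe_mem_image_iff_mem_range_periodicLift hn hx01
  have hyX : ∀ j, (y j : Circle1) ∈ X := fun j => (hmem _).2 ⟨j, rfl⟩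
  have hdX : MapsTo (md d) X X := fun t ht => him ▸ mem_image_of_mem _ ht
  have hGy : ∀ j, (G (y j) : Circle1) = ((d * y j : ℝ) : Circle1) := fun j => by
    rw [← hG, hgX _ (hyX j), md_coe]
  have hmap : ∀ j, G (y j) ∈ range y := fun j =>
    (hmem _).1 (by rw [hGy, ← md_coe]; exact hdX (hyX j))
  have hinjX : InjOn (md d) X :=
    ((hfin.surjOn_iff_bijOn_of_mapsTo hdX).1 (fun t ht => by rwa [him])).injOn
  have hinj : InjOn g (range fun j => (y j : Circle1)) :=
    (hinjX.mono (range_subset_iff.2 hyX)).congr fun t ht => (hgX t (range_subset_iff.2 hyX ht)).symm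
  have hy := strictMono_periodicLift hn hx hx01
  obtain ⟨c, hc⟩ :=
    G.exists_map_comp_eq_comp_add hn hy hper hmap (hG.injective_comp hy.injective hinj)
  refine ⟨x, (c % n).toNat, toNat_emod_lt hn c, ?_, ⟨hx, hx01, fun i hi => ?_⟩, hXx⟩
  · rw [hρ, G.translationNumber_eq_of_map_comp_eq_comp_add hn hper hc,
      coe_div_eq_coe_toNat_emod_div hn]
  have hyi : y i = x i := periodicLift_natCast hi
  have hidx : ((i + c) % n).toNat = (i + (c % n).toNat) % n := by
    have hn' : (n : ℤ) ≠ 0 := by omega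
    zify
    rw [Int.toNat_of_nonneg (Int.emod_nonneg c hn'), Int.toNat_of_nonneg (Int.emod_nonneg _ hn')]
    exact (Int.add_emod_emod _ _ _).symm
  rw [← hyi, ← coe_eq_coe_iff_fract_eq.1 (hGy i), hc, fract_periodicLift hn hx01, hidx]

def countBelow (n : ℕ) (x : ℕ → ℝ) (c : ℝ) : ℕ := ((Finset.range n).filter (x · < c)).card

section countBelow

variable {n : ℕ} {x : ℕ → ℝ}

theorem countBelow_le (c : ℝ) : countBelow n x c ≤ n :=
  (Finset.card_filter_le _ _).trans (Finset.card_range n).le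

theorem countBelow_mono {c c' : ℝ} (h : c ≤ c') : countBelow n x c ≤ countBelow n x c' :=
  Finset.card_le_card (Finset.monotone_filter_right _ fun _ _ hi => hi.trans_le h)

theorem countBelow_eq_of_forall_lt {c : ℝ} (h : ∀ i < n, x i < c) : countBelow n x c = n := by
  rw [countBelow, Finset.filter_true_of_mem fun i hi => h i (Finset.mem_range.1 hi),
    Finset.card_range]

theorem StrictMonoOn.lt_iff_lt_countBelow (hx : StrictMonoOn x (Iio n)) {i : ℕ} (hi : i < n)
    (c : ℝ) : x i < c ↔ i < countBelow n x c := by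
  constructor
  · intro hxi
    have : Finset.range (i + 1) ⊆ (Finset.range n).filter (x · < c) := fun j hj => by
      rw [Finset.mem_range] at hj
      rw [Finset.mem_filter, Finset.mem_range]
      exact ⟨by omega, (hx.le_iff_le (show j < n by omega) hi).2 (by omega) |>.trans_lt hxi⟩
    simpa [countBelow] using Finset.card_le_card this
  · intro hic
    by_contra hxi
    have : (Finset.range n).filter (x · < c) ⊆ Finset.range i := fun j hj => by
      rw [Finset.mem_filter, Finset.mem_range] at hj
      rw [Finset.mem_range]
      by_contra hji
      exact hxi ((hx.le_iff_le hi hj.1).2 (not_lt.1 hji) |>.trans_lt hj.2)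
    have := Finset.card_le_card this
    simp only [Finset.card_range] at this
    exact absurd hic (not_lt.2 this)

theorem StrictMonoOn.countBelow_eq (hx : StrictMonoOn x (Iio n)) {k : ℕ} (hk : 0 < k)
    (hkn : k < n) {c : ℝ} (hlt : x (k - 1) < c) (hle : c ≤ x k) : countBelow n x c = k := by
  have h1 := (hx.lt_iff_lt_countBelow (show k - 1 < n by omega) c).1 hlt
  have h2 := (hx.lt_iff_lt_countBelow hkn c).not.1 hle.not_gt
  omega

theorem s1_image_eq_countBelow (hx : StrictMonoOn x (Iio n)) (hx01 : ∀ i < n, x i ∈ Ico (0 : ℝ) 1) :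
    s1 ((fun i => (x i : Circle1)) '' Iio n) = countBelow n x (1 / 2) := by
  have hrep : ∀ i < n, (AddCircle.equivIco 1 0 (x i : Circle1) : ℝ) = x i := fun i hi => by
    rw [equivIco_coe, Int.fract_eq_self.2 (hx01 i hi)]
  have hset : {t ∈ (fun i => (x i : Circle1)) '' Iio n | (AddCircle.equivIco 1 0 t : ℝ) < 1 / 2}
      = (fun i => (x i : Circle1)) '' ↑((Finset.range n).filter (x · < 1 / 2)) := by
    ext t
    simp only [mem_ofPred_eq, mem_image, mem_Iio, Finset.coe_filter, Finset.mem_range]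
    constructor
    · rintro ⟨⟨i, hi, rfl⟩, hlt⟩
      exact ⟨i, ⟨hi, hrep i hi ▸ hlt⟩, rfl⟩
    · rintro ⟨i, ⟨hi, hlt⟩, rfl⟩
      exact ⟨⟨i, hi, rfl⟩, (hrep i hi).symm ▸ hlt⟩
  have hinj : InjOn (fun i => (x i : Circle1)) ↑((Finset.range n).filter (x · < 1 / 2)) :=
    fun i hi j hj h => by
      simp only [Finset.coe_filter, Finset.mem_range, mem_ofPred_eq] at hi hj
      refine hx.injOn hi.1 hj.1 ?_
      rw [← hrep i hi.1, ← hrep j hj.1]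
      exact congrArg (fun t => (AddCircle.equivIco 1 0 t : ℝ)) h
  rw [s1, hset, hinj.ncard_image, ncard_coe_finset, countBelow]

end countBelow

theorem floor_three_mul_eq {u : ℝ} (hu : u ∈ Ico (0 : ℝ) 1) :
    ⌊3 * u⌋ = if u < 1 / 3 then 0 else if u < 2 / 3 then 1 else 2 := by
  obtain ⟨h0, h1⟩ := hu
  split_ifs with ha hb <;> rw [Int.floor_eq_iff] <;> push_cast <;> constructor <;> linarith

theorem eq_zero_of_mul_abs_le_abs_comp {ι : Type*} [Finite ι] {f : ι → ℝ} {σ : ι → ι} {c : ℝ}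
    (hc : 1 < c) (h : ∀ i, c * |f i| ≤ |f (σ i)|) : f = 0 := by
  cases isEmpty_or_nonempty ι
  · exact funext isEmptyElim
  obtain ⟨i₀, hi₀⟩ := Finite.exists_max fun i => |f i|
  have hmax : |f i₀| ≤ 0 := by nlinarith [h i₀, hi₀ (σ i₀), abs_nonneg (f i₀)]
  exact funext fun i => abs_nonpos_iff.1 ((hi₀ i).trans hmax)

namespace IsRotationEnum

variable {n r : ℕ} {x : ℕ → ℝ}

theorem three_mul_eq (hx : IsRotationEnum 3 n r x) {i : ℕ} (hi : i < n) :
    3 * x i = ⌊3 * x i⌋ + x ((i + r) % n) := by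
  rw [← hx.fract_mul i hi]
  push_cast
  exact (Int.floor_add_fract _).symm

/-- The digit `⌊3 x_i⌋` jumps between the two indices `n - r - 1`, `n - r` that `i ↦ i + r`
sends to the last and the first point. -/
theorem countBelow_third_or_twoThirds (hx : IsRotationEnum 3 n r x) (hr : r < n) :
    countBelow n x (1 / 3) = n - r ∨ countBelow n x (2 / 3) = n - r := by
  rcases Nat.eq_zero_or_pos r with rfl | hr0
  · refine .inr (countBelow_eq_of_forall_lt fun i hi => ?_)
    have h := hx.three_mul_eq hi
    rw [add_zero, Nat.mod_eq_of_lt hi] at h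
    have : ⌊3 * x i⌋ < 2 := by
      have := (hx.mem_Ico i hi).2
      exact_mod_cast (show ((⌊3 * x i⌋ : ℤ) : ℝ) < 2 by linarith)
    have : ((⌊3 * x i⌋ : ℤ) : ℝ) ≤ 1 := by exact_mod_cast Int.lt_add_one_iff.1 this
    linarith
  set w := n - r
  have hw : w - 1 < n := by omega
  have hlast := hx.three_mul_eq hw
  have hfirst := hx.three_mul_eq (show w < n by omega)
  rw [show w - 1 + r = n - 1 by omega, Nat.mod_eq_of_lt (show n - 1 < n by omega)] at hlast
  rw [show (w + r) % n = 0 by rw [show w + r = n by omega, Nat.mod_self]] at hfirst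
  have hwx := hx.strictMonoOn hw (show w < n by omega) (show w - 1 < w by omega)
  have h0x := hx.strictMonoOn (show 0 < n by omega) (show n - 1 < n by omega)
    (show 0 < n - 1 by omega)
  have hjump : ⌊3 * x (w - 1)⌋ < ⌊3 * x w⌋ := by
    exact_mod_cast (show ((⌊3 * x (w - 1)⌋ : ℤ) : ℝ) < ⌊3 * x w⌋ by linarith)
  have hlo := Int.floor_nonneg.2 (show 0 ≤ 3 * x (w - 1) by linarith [(hx.mem_Ico _ hw).1])
  have hhi : ⌊3 * x w⌋ < 3 := Int.floor_lt.2 (by push_cast; linarith [(hx.mem_Ico w (by omega)).2])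
  have hw0 : 0 < w := by omega
  rcases lt_or_ge ⌊3 * x (w - 1)⌋ 1 with h | h
  · refine .inl (hx.strictMonoOn.countBelow_eq hw0 (by omega) ?_ ?_)
    · have := Int.floor_lt.1 h; push_cast at this; linarith
    · have := Int.le_floor.1 (show (1 : ℤ) ≤ ⌊3 * x w⌋ by omega); push_cast at this; linarith
  · refine .inr (hx.strictMonoOn.countBelow_eq hw0 (by omega) ?_ ?_)
    · have := Int.floor_lt.1 (show ⌊3 * x (w - 1)⌋ < 2 by omega); push_cast at this; linarith
    · have := Int.le_floor.1 (show (2 : ℤ) ≤ ⌊3 * x w⌋ by omega); push_cast at this; linarith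

theorem countBelow_twoThirds_eq_half_of_third (hx : IsRotationEnum 3 n r x) (hr : r < n)
    (ha : countBelow n x (1 / 3) = n - r) :
    countBelow n x (2 / 3) = countBelow n x (1 / 2) := by
  set s := countBelow n x (1 / 2)
  have hsb : s ≤ countBelow n x (2 / 3) := countBelow_mono (by norm_num)
  have has : n - r ≤ s := ha ▸ countBelow_mono (by norm_num)
  -- otherwise `x s ∈ [1/2, 2/3)` goes to `3 x s - 1 ≥ 1/2`, but `s ≥ n - r` goes to `s + r - n < s`
  by_contra hne
  have hs : s < n := (lt_of_le_of_ne hsb (Ne.symm hne)).trans_le (countBelow_le _)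
  have hx23 := (hx.strictMonoOn.lt_iff_lt_countBelow hs (2 / 3)).2 (by omega)
  have hx12 := not_lt.1 <| (hx.strictMonoOn.lt_iff_lt_countBelow hs (1 / 2)).not.2 (lt_irrefl s)
  have hfloor : ⌊3 * x s⌋ = 1 := by
    rw [floor_three_mul_eq (hx.mem_Ico s hs), if_neg (by linarith), if_pos hx23]
  have h := hx.three_mul_eq hs
  rw [hfloor, Nat.mod_eq_sub_mod (by omega), Nat.mod_eq_of_lt (by omega)] at h
  have := (hx.strictMonoOn.lt_iff_lt_countBelow (show s + r - n < n by omega) (1 / 2)).2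
    (by omega)
  push_cast at h
  linarith

theorem countBelow_third_eq_half_of_twoThirds (hx : IsRotationEnum 3 n r x)
    (hb : countBelow n x (2 / 3) = n - r) :
    countBelow n x (1 / 3) = countBelow n x (1 / 2) := by
  set s := countBelow n x (1 / 2)
  have has : countBelow n x (1 / 3) ≤ s := countBelow_mono (by norm_num)
  have hsb : s ≤ n - r := hb ▸ countBelow_mono (by norm_num)
  -- otherwise `x (s - 1) ∈ [1/3, 1/2)` goes to `3 x (s - 1) - 1 < 1/2` at index `s - 1 + r`,
  -- which forces `r = 0` and then `x (s - 1) = 1/2`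
  by_contra hne
  have hs : s - 1 < n := by omega
  have hx13 := not_lt.1 <| (hx.strictMonoOn.lt_iff_lt_countBelow hs (1 / 3)).not.2 (by omega)
  have hx12 := (hx.strictMonoOn.lt_iff_lt_countBelow hs (1 / 2)).2 (by omega)
  have hfloor : ⌊3 * x (s - 1)⌋ = 1 := by
    rw [floor_three_mul_eq (hx.mem_Ico _ hs), if_neg hx13.not_gt, if_pos (by linarith)]
  have h := hx.three_mul_eq hs
  rw [hfloor, Nat.mod_eq_of_lt (show s - 1 + r < n by omega)] at h
  push_cast at h
  have := (hx.strictMonoOn.lt_iff_lt_countBelow (show s - 1 + r < n by omega) (1 / 2)).1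
    (by linarith)
  obtain rfl : r = 0 := by omega
  rw [add_zero] at h
  linarith

theorem countBelow_third_eq_min_and_twoThirds_eq_max (hx : IsRotationEnum 3 n r x) (hr : r < n) :
    countBelow n x (1 / 3) = min (n - r) (countBelow n x (1 / 2)) ∧
      countBelow n x (2 / 3) = max (n - r) (countBelow n x (1 / 2)) := by
  have has : countBelow n x (1 / 3) ≤ countBelow n x (1 / 2) := countBelow_mono (by norm_num)
  have hsb : countBelow n x (1 / 2) ≤ countBelow n x (2 / 3) := countBelow_mono (by norm_num)
  rcases hx.countBelow_third_or_twoThirds hr with ha | hb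
  · have := hx.countBelow_twoThirds_eq_half_of_third hr ha
    omega
  · have := hx.countBelow_third_eq_half_of_twoThirds hb
    omega

theorem eqOn_of_countBelow_half_eq (hx : IsRotationEnum 3 n r x) (hr : r < n)
    {y : ℕ → ℝ} (hy : IsRotationEnum 3 n r y)
    (hs : countBelow n x (1 / 2) = countBelow n y (1 / 2)) : EqOn x y (Iio n) := by
  obtain ⟨ha, hb⟩ := hx.countBelow_third_eq_min_and_twoThirds_eq_max hr
  obtain ⟨ha', hb'⟩ := hy.countBelow_third_eq_min_and_twoThirds_eq_max hr
  have hfloor : ∀ i < n, ⌊3 * x i⌋ = ⌊3 * y i⌋ := fun i hi => by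
    simp only [floor_three_mul_eq (hx.mem_Ico i hi), floor_three_mul_eq (hy.mem_Ico i hi),
      hx.strictMonoOn.lt_iff_lt_countBelow hi, hy.strictMonoOn.lt_iff_lt_countBelow hi,
      ha, hb, ha', hb', hs]
  have hzero := eq_zero_of_mul_abs_le_abs_comp (f := fun i : Fin n => x i - y i)
    (σ := fun i => ⟨(i + r) % n, Nat.mod_lt _ (by omega)⟩) (c := 3) (by norm_num) fun i => by
      have hxi := hx.three_mul_eq i.2
      have hyi := hy.three_mul_eq i.2
      rw [hfloor i i.2] at hxi
      show 3 * |x i - y i| ≤ |x ((i + r) % n) - y ((i + r) % n)|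
      rw [show x ((i + r) % n) - y ((i + r) % n) = 3 * (x i - y i) by linarith, abs_mul,
        abs_of_pos (three_pos : (0 : ℝ) < 3)]
  exact fun i hi => sub_eq_zero.1 (congrFun hzero ⟨i, hi⟩)

end IsRotationEnum

theorem eq_of_coe_div_eq_coe_div {n r r' : ℕ} (hr : r < n) (hr' : r' < n)
    (h : ((r / n : ℝ) : Circle1) = ((r' / n : ℝ) : Circle1)) : r = r' := by
  have hn : (0 : ℝ) < n := by exact_mod_cast (Nat.zero_le r).trans_lt hr
  have hmem : ∀ k < n, (k / n : ℝ) ∈ Ico (0 : ℝ) (0 + 1) := fun k hk => by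
    rw [zero_add, mem_Ico, div_lt_one hn]
    exact ⟨by positivity, by exact_mod_cast hk⟩
  rw [AddCircle.coe_eq_coe_iff_of_mem_Ico (hmem r hr) (hmem r' hr'), div_left_inj' hn.ne'] at h
  exact_mod_cast h

theorem goldberg_uniqueness_m3_general
    (p q : ℕ) (hq : 1 ≤ q) (hpq : p < q)
    (X Y : Set Circle1)
    (hX : IsRotationSetWith 3 X ((((p : ℝ) / (q : ℝ)) : ℝ) : Circle1))
    (hY : IsRotationSetWith 3 Y ((((p : ℝ) / (q : ℝ)) : ℝ) : Circle1))
    (hXcard : X.ncard = 2 * q) (hYcard : Y.ncard = 2 * q)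
    (hs1 : s1 X = s1 Y) :
    X = Y := by
  have hρ : ((p / q : ℝ) : Circle1) = (((2 * p : ℕ) / (2 * q : ℕ) : ℝ) : Circle1) := by
    push_cast
    rw [mul_div_mul_left _ _ two_ne_zero]
  obtain ⟨x, r, hr, hρx, hx, hXx⟩ := hX.exists_isRotationEnum (Set.finite_of_ncard_pos (by omega))
  obtain ⟨y, r', hr', hρy, hy, hYy⟩ := hY.exists_isRotationEnum (Set.finite_of_ncard_pos (by omega))
  rw [hXcard] at hr hρx hx hXx
  rw [hYcard] at hr' hρy hy hYy
  obtain rfl := eq_of_coe_div_eq_coe_div hr (by omega) (hρx.symm.trans hρ)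
  obtain rfl := eq_of_coe_div_eq_coe_div hr' (by omega) (hρy.symm.trans hρ)
  rw [hXx, hYy, s1_image_eq_countBelow hx.strictMonoOn hx.mem_Ico,
    s1_image_eq_countBelow hy.strictMonoOn hy.mem_Ico] at hs1
  rw [hXx, hYy]
  exact image_congr fun i hi => congrArg _ (hx.eqOn_of_countBelow_half_eq hr hy hs1 hi)

/-- Goldberg, uniqueness. Two rotation sets for `m_3` with the same
rotation number `p/q`, each the union of two distinct periodic orbits with `2q` elements,
and with the same number of elements in `[0,1/2)`, are equal. -/
theorem goldberg_uniqueness_m3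
    (p q : ℕ) (hq : 1 ≤ q) (hpq : p < q) (hcop : Nat.Coprime p q)
    (X Y : Set Circle1)
    (hX : IsRotationSetWith 3 X ((((p : ℝ) / (q : ℝ)) : ℝ) : Circle1))
    (hY : IsRotationSetWith 3 Y ((((p : ℝ) / (q : ℝ)) : ℝ) : Circle1))
    (hXcyc : ∃ C C' : Set Circle1, IsPeriodicOrbit 3 C ∧ IsPeriodicOrbit 3 C' ∧
      C ≠ C' ∧ X = C ∪ C')
    (hYcyc : ∃ C C' : Set Circle1, IsPeriodicOrbit 3 C ∧ IsPeriodicOrbit 3 C' ∧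
      C ≠ C' ∧ Y = C ∪ C')
    (hXcard : X.ncard = 2 * q) (hYcard : Y.ncard = 2 * q)
    (hs1 : s1 X = s1 Y) :
    X = Y :=
  goldberg_uniqueness_m3_general p q hq hpq X Y hX hY hXcard hYcard hs1
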